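/- Let F be a finite field with q elements, let K ≥ 1, M ≥ 0, N ≥ 0 and 1 ≤ d ≤ K be integers, let v ∈ F^K be a row vector with exactly l nonzero entries where 1 ≤ l ≤ K, and let H be an M×N matrix over F with rank(H) = k. Then Σ over all d-element subsets I ⊆ {1,…,K} of the number of d×M matrices G over F with v_I·G·H = 0 equals C(K−l, d)·q^{dM} + (C(K,d) − C(K−l,d))·q^{dM−k}, where v_I is the 1×d row subvector of v formed by the entries with indices in I. Equivalently, if I is a uniformly random d-element subset of {1,…,K} and G an independent uniformly random d×M matrix over F, then Pr{v_I·G·H = 0} = C(K−l,d)/C(K,d) + (1 − C(K−l,d)/C(K,d))·q^{−k}. -/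

import Mathlib

/-!
For a fixed row vector `u`, the map `G ↦ u ᵥ* (G * H)` is linear in `G`. If `u = 0` every `G`
is a solution; otherwise `G ↦ u ᵥ* G` is onto, so the map has the same range as `w ↦ w ᵥ* H`,
of dimension `rank H`, and rank–nullity gives `q ^ (d * M - rank H)` solutions. The subvector
`v_I` vanishes exactly when `I` lies in the zero set of `v`, which has `K - l` elements, so
`C(K - l, d)` of the `d`-subsets contribute `q ^ (d * M)` and the others `q ^ (d * M - k)`.
-/

open Matrix Finset Module

section Counting

variable {F ι m n : Type*} [Field F] [Fintype ι]

theorem vecMulBilin_surjective {u : ι → F} (hu : u ≠ 0) :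
    Function.Surjective (vecMulBilin F F u : Matrix ι m F →ₗ[F] m → F) := by
  classical
  obtain ⟨i, hi⟩ := Function.ne_iff.mp hu
  intro w
  refine ⟨vecMulVec (Pi.single i (u i)⁻¹) w, ?_⟩
  rw [vecMulBilin_apply, vecMul_vecMulVec, dotProduct_single, mul_inv_cancel₀ hi, one_smul]

theorem finrank_range_vecMulLinear_comp_vecMulBilin [Fintype m] [Fintype n] (H : Matrix m n F)
    {u : ι → F} (hu : u ≠ 0) :
    finrank F (LinearMap.range (H.vecMulLinear ∘ₗ vecMulBilin F F u)) = H.rank := by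
  rw [LinearMap.range_comp_of_range_eq_top _ (LinearMap.range_eq_top.mpr
    (vecMulBilin_surjective hu)), ← H.rank_transpose, rank, mulVecLin_transpose]

theorem card_vecMul_mul_eq_zero [Fintype F] [DecidableEq F] [Fintype m] [Fintype n]
    (H : Matrix m n F) (u : ι → F) :
    Nat.card {G : Matrix ι m F // u ᵥ* (G * H) = 0}
      = if u = 0 then Fintype.card F ^ (Fintype.card ι * Fintype.card m)
        else Fintype.card F ^ (Fintype.card ι * Fintype.card m - H.rank) := by
  classical
  set φ := H.vecMulLinear ∘ₗ vecMulBilin F F u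
  have hker : Nat.card {G : Matrix ι m F // u ᵥ* (G * H) = 0}
      = Fintype.card F ^ finrank F (LinearMap.ker φ) := by
    rw [← card_eq_pow_finrank, ← Nat.card_eq_fintype_card]
    exact Nat.card_congr <| Equiv.subtypeEquivRight fun G => by
      simp [φ, LinearMap.mem_ker, vecMul_vecMul]
  have hdim : finrank F (Matrix ι m F) = Fintype.card ι * Fintype.card m := by
    simp [finrank_matrix]
  split_ifs with hu
  · subst hu
    have : LinearMap.ker φ = ⊤ := LinearMap.ker_eq_top.mpr <| by ext; simp [φ]
    rw [hker, this, finrank_top, hdim]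
  · have := φ.finrank_range_add_finrank_ker
    rw [hdim, finrank_range_vecMulLinear_comp_vecMulBilin H hu] at this
    rw [hker, ← this, Nat.add_sub_cancel_left]

end Counting

theorem sum_powersetCard_ite_subset {α β : Type*} [Fintype α] [DecidableEq α] [AddCommMonoid β]
    (Z : Finset α) (d : ℕ) (a b : β) :
    ∑ I ∈ powersetCard d (univ : Finset α), (if I ⊆ Z then a else b)
      = (#Z).choose d • a + ((Fintype.card α).choose d - (#Z).choose d) • b := by
  have hin : {I ∈ powersetCard d (univ : Finset α) | I ⊆ Z} = powersetCard d Z := by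
    ext I
    simp only [mem_filter, mem_powersetCard, subset_univ, true_and]
    tauto
  have hout : #{I ∈ powersetCard d (univ : Finset α) | ¬I ⊆ Z}
      = (Fintype.card α).choose d - (#Z).choose d := by
    rw [filter_not, card_sdiff_of_subset (filter_subset _ _), hin, card_powersetCard,
      card_powersetCard, card_univ]
  rw [sum_ite, sum_const, sum_const, hin, card_powersetCard, hout]

theorem add_mul_pow_sub_div_mul_pow {c C q : ℝ} {D k : ℕ} (hC : C ≠ 0) (hq : q ≠ 0)
    (hk : k ≤ D) :
    (c * q ^ D + (C - c) * q ^ (D - k)) / (C * q ^ D) = c / C + (1 - c / C) * q ^ (-(k : ℤ)) := by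
  have hpow : q ^ (D - k) = q ^ D * q ^ (-(k : ℤ)) := by
    rw [← zpow_natCast, ← zpow_natCast, ← zpow_add₀ hq]
    congr 1
    omega
  rw [hpow]
  field_simp

theorem card_subvector_GH_eq_zero_general (F : Type*) [Field F] [Fintype F] [DecidableEq F]
    (q : ℕ) (hq : q = Fintype.card F)
    (K M N d l k : ℕ) (hd1 : 1 ≤ d) (hdK : d ≤ K)
    (v : Fin K → F) (hv : (Finset.univ.filter (fun i => v i ≠ 0)).card = l)
    (H : Matrix (Fin M) (Fin N) F) (hH : H.rank = k) :
    ∑ I ∈ Finset.powersetCard d (Finset.univ : Finset (Fin K)),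
        Nat.card {G : Matrix {x // x ∈ I} (Fin M) F //
          Matrix.vecMul (fun i : {x // x ∈ I} => v i.1) (G * H) = 0}
      = (K - l).choose d * q ^ (d * M)
        + (K.choose d - (K - l).choose d) * q ^ (d * M - k) ∧
    (∑ I ∈ Finset.powersetCard d (Finset.univ : Finset (Fin K)),
        (Nat.card {G : Matrix {x // x ∈ I} (Fin M) F //
          Matrix.vecMul (fun i : {x // x ∈ I} => v i.1) (G * H) = 0} : ℝ))
          / ((K.choose d : ℝ) * (q : ℝ) ^ (d * M))
      = ((K - l).choose d : ℝ) / (K.choose d : ℝ)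
        + (1 - ((K - l).choose d : ℝ) / (K.choose d : ℝ))
            * (q : ℝ) ^ (-(k : ℤ)) := by
  set Z : Finset (Fin K) := {i | v i = 0}
  have hZ : #Z = K - l := by
    have : #Z + #{i | v i ≠ 0} = K := by
      simpa using card_filter_add_card_filter_not (s := (univ : Finset (Fin K))) (v · = 0)
    omega
  have hcount : ∀ I ∈ powersetCard d (univ : Finset (Fin K)),
      Nat.card {G : Matrix I (Fin M) F // (fun i : I => v i) ᵥ* (G * H) = 0}
        = if I ⊆ Z then q ^ (d * M) else q ^ (d * M - k) := by
    intro I hI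
    have hsub : (fun i : I => v i) = 0 ↔ I ⊆ Z := by
      simp [funext_iff, subset_iff, Z]
    rw [card_vecMul_mul_eq_zero, Fintype.card_coe, (mem_powersetCard.mp hI).2, Fintype.card_fin,
      hH, ← hq]
    exact if_congr hsub rfl rfl
  have hsum := (sum_congr rfl hcount).trans (sum_powersetCard_ite_subset Z d _ _)
  rw [hZ, Fintype.card_fin, smul_eq_mul, smul_eq_mul] at hsum
  refine ⟨hsum, ?_⟩
  have hk : k ≤ d * M := hH ▸ (H.rank_le_card_height.trans_eq (Fintype.card_fin M)).trans
    (Nat.le_mul_of_pos_left M hd1)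
  have hle : (K - l).choose d ≤ K.choose d := Nat.choose_le_choose d (Nat.sub_le K l)
  rw [← Nat.cast_sum, hsum]
  push_cast [Nat.cast_sub hle]
  exact add_mul_pow_sub_div_mul_pow (Nat.cast_ne_zero.mpr (Nat.choose_pos hdK).ne')
    (Nat.cast_ne_zero.mpr (hq ▸ Fintype.card_ne_zero)) hk

/-- Let `F` be a finite field with `q` elements, `1 ≤ d ≤ K`, `v ∈ F^K` a row
vector with exactly `l` nonzero entries (`1 ≤ l ≤ K`), and `H` an `M×N` matrix
over `F` with `rank H = k`. Then the sum, over all `d`-element subsets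
`I ⊆ {1,…,K}`, of the number of `d×M` matrices `G` over `F` with
`v_I·G·H = 0` (where `v_I` is the subvector of `v` with indices in `I`, and
the rows of `G` are indexed by `I`) equals
`C(K−l, d)·q^{dM} + (C(K,d) − C(K−l,d))·q^{dM−k}`. Equivalently, for a
uniformly random `d`-element subset `I` of `{1,…,K}` and an independent
uniformly random `d×M` matrix `G` over `F`,
`Pr{v_I·G·H = 0} = C(K−l,d)/C(K,d) + (1 − C(K−l,d)/C(K,d))·q^{−k}`. -/
theorem card_subvector_GH_eq_zero (F : Type*) [Field F] [Fintype F] [DecidableEq F]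
    (q : ℕ) (hq : q = Fintype.card F)
    (K M N d l k : ℕ) (hK : 1 ≤ K) (hd1 : 1 ≤ d) (hdK : d ≤ K)
    (hl1 : 1 ≤ l) (hlK : l ≤ K)
    (v : Fin K → F) (hv : (Finset.univ.filter (fun i => v i ≠ 0)).card = l)
    (H : Matrix (Fin M) (Fin N) F) (hH : H.rank = k) :
    ∑ I ∈ Finset.powersetCard d (Finset.univ : Finset (Fin K)),
        Nat.card {G : Matrix {x // x ∈ I} (Fin M) F //
          Matrix.vecMul (fun i : {x // x ∈ I} => v i.1) (G * H) = 0}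
      = (K - l).choose d * q ^ (d * M)
        + (K.choose d - (K - l).choose d) * q ^ (d * M - k) ∧
    (∑ I ∈ Finset.powersetCard d (Finset.univ : Finset (Fin K)),
        (Nat.card {G : Matrix {x // x ∈ I} (Fin M) F //
          Matrix.vecMul (fun i : {x // x ∈ I} => v i.1) (G * H) = 0} : ℝ))
          / ((K.choose d : ℝ) * (q : ℝ) ^ (d * M))
      = ((K - l).choose d : ℝ) / (K.choose d : ℝ)
        + (1 - ((K - l).choose d : ℝ) / (K.choose d : ℝ))
            * (q : ℝ) ^ (-(k : ℤ)) :=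
  card_subvector_GH_eq_zero_general F q hq K M N d l k hd1 hdK v hv H hH
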